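/- The height of the triangle P₀P₁Q₁ with respect to the base P₀P₁ equals √(h² + 4 sin²(πρ) sin²(πρ + π/n)) = √(h² + (cos(2πρ + π/n) − cos(π/n))²). That is, |P₀Q₁|² − ((|P₀P₁|² + |P₀Q₁|² − |P₁Q₁|²)/(2|P₀P₁|))² = h² + (cos(2πρ + π/n) − cos(π/n))². -/

import Mathlib

/-!
Put `x = πρ` and `α = π/n`, so that the three points sit at the angles `0`, `2α`, `2x + 2α`, and
each squared side is `4 sin²` of half the angular gap plus the squared difference of heights.
After rotating by `-α` the base is the vertical chord from `e^{-iα}` to `e^{iα}` and `Q₁` lies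
over `e^{iθ}`, `θ = 2x + α`: the projection of `P₀Q₁` on the base is `sin θ + sin α`, and what is
left of `|P₀Q₁|² = (sin θ + sin α)² + (cos θ - cos α)² + h²` is the squared height.
-/

open Real Complex

/-- Euclidean distance on ℂ × ℝ. -/
noncomputable def eDist (p q : ℂ × ℝ) : ℝ :=
  Real.sqrt (‖p.1 - q.1‖ ^ 2 + (p.2 - q.2) ^ 2)

theorem eDist_sq (p q : ℂ × ℝ) : eDist p q ^ 2 = ‖p.1 - q.1‖ ^ 2 + (p.2 - q.2) ^ 2 :=
  Real.sq_sqrt (by positivity)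

theorem norm_exp_ofReal_mul_I_sub_exp_sq (x y : ℝ) :
    ‖exp (x * I) - exp (y * I)‖ ^ 2 = 4 * Real.sin ((x - y) / 2) ^ 2 := by
  have hfactor : exp (x * I) - exp (y * I) = exp (y * I) * (exp (I * ↑(x - y)) - 1) := by
    rw [mul_sub, ← Complex.exp_add, mul_one]
    congr 2
    push_cast
    ring
  rw [hfactor, norm_mul, Complex.norm_exp_ofReal_mul_I, one_mul,
    Complex.norm_exp_I_mul_ofReal_sub_one, Real.norm_eq_abs, sq_abs]
  ring

theorem eDist_exp_ofReal_mul_I_sq (x y z w : ℝ) :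
    eDist (exp (x * I), z) (exp (y * I), w) ^ 2
      = 4 * Real.sin ((x - y) / 2) ^ 2 + (z - w) ^ 2 := by
  rw [eDist_sq, norm_exp_ofReal_mul_I_sub_exp_sq]

theorem sin_add_sq_sub_sin_sq (x α : ℝ) :
    Real.sin (x + α) ^ 2 - Real.sin x ^ 2 = Real.sin α * Real.sin (2 * x + α) := by
  rw [show 2 * x + α = (x + α) + x by ring, Real.sin_add (x + α) x]
  simp only [Real.sin_add, Real.cos_add]
  linear_combination Real.sin x ^ 2 * Real.sin_sq_add_cos_sq α

theorem four_mul_sin_add_sq (x α : ℝ) :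
    4 * Real.sin (x + α) ^ 2
      = (Real.sin (2 * x + α) + Real.sin α) ^ 2 + (Real.cos (2 * x + α) - Real.cos α) ^ 2 := by
  rw [Real.sin_sq_eq_half_sub, show 2 * (x + α) = (2 * x + α) + α by ring, Real.cos_add]
  linear_combination (-1 : ℝ) * Real.sin_sq_add_cos_sq (2 * x + α) - Real.sin_sq_add_cos_sq α

theorem height_sq_eq (x α h b : ℝ) (hb : b ^ 2 = 4 * Real.sin α ^ 2) (hα : Real.sin α ≠ 0) :
    (4 * Real.sin (x + α) ^ 2 + h ^ 2) -
      ((b ^ 2 + (4 * Real.sin (x + α) ^ 2 + h ^ 2) - (4 * Real.sin x ^ 2 + h ^ 2)) / (2 * b)) ^ 2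
      = h ^ 2 + (Real.cos (2 * x + α) - Real.cos α) ^ 2 := by
  have hproj : ((b ^ 2 + (4 * Real.sin (x + α) ^ 2 + h ^ 2) - (4 * Real.sin x ^ 2 + h ^ 2))
      / (2 * b)) ^ 2 = (Real.sin (2 * x + α) + Real.sin α) ^ 2 := by
    have hnum : b ^ 2 + (4 * Real.sin (x + α) ^ 2 + h ^ 2) - (4 * Real.sin x ^ 2 + h ^ 2)
        = 4 * Real.sin α * (Real.sin (2 * x + α) + Real.sin α) := by
      linear_combination hb + 4 * sin_add_sq_sub_sin_sq x α
    rw [hnum, div_pow, mul_pow 2 b, hb]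
    field_simp
    ring
  rw [hproj, four_mul_sin_add_sq]
  ring

theorem cos_two_mul_add_sub_cos_sq (x α : ℝ) :
    (Real.cos (2 * x + α) - Real.cos α) ^ 2 = 4 * Real.sin x ^ 2 * Real.sin (x + α) ^ 2 := by
  rw [Real.cos_sub_cos, show (2 * x + α + α) / 2 = x + α by ring,
    show (2 * x + α - α) / 2 = x by ring]
  ring

theorem sin_pi_div_ne_zero {n : ℕ} (hn : 2 ≤ n) : Real.sin (π / n) ≠ 0 := by
  have hn' : (1 : ℝ) < n := by exact_mod_cast hn
  refine (Real.sin_pos_of_pos_of_lt_pi (by positivity) ?_).ne'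
  exact div_lt_self Real.pi_pos hn'

theorem stmt3_general (n : ℕ) (hn : 3 ≤ n) (h ρ : ℝ)
    (P₀ P₁ Q₁ : ℂ × ℝ)
    (hP0 : P₀ = (1, 0))
    (hP1 : P₁ = (Complex.exp (2 * Real.pi * Complex.I / n), 0))
    (hQ1 : Q₁ = (Complex.exp (2 * Real.pi * Complex.I * ρ + 2 * Real.pi * Complex.I / n), h)) :
    eDist P₀ Q₁ ^ 2 -
      ((eDist P₀ P₁ ^ 2 + eDist P₀ Q₁ ^ 2 - eDist P₁ Q₁ ^ 2) / (2 * eDist P₀ P₁)) ^ 2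
      = h ^ 2 + (Real.cos (2 * Real.pi * ρ + Real.pi / n) - Real.cos (Real.pi / n)) ^ 2 ∧
    h ^ 2 + (Real.cos (2 * Real.pi * ρ + Real.pi / n) - Real.cos (Real.pi / n)) ^ 2
      = h ^ 2 + 4 * Real.sin (Real.pi * ρ) ^ 2 * Real.sin (Real.pi * ρ + Real.pi / n) ^ 2 := by
  set x := π * ρ
  set α := π / n
  have hP0' : P₀ = (exp (↑(0 : ℝ) * I), 0) := by simp [hP0]
  have hP1' : P₁ = (exp (↑(2 * α) * I), 0) := by
    rw [hP1]; congr 2; push_cast [α]; ring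
  have hQ1' : Q₁ = (exp (↑(2 * x + 2 * α) * I), h) := by
    rw [hQ1]; congr 2; push_cast [x, α]; ring
  have hB : eDist P₀ P₁ ^ 2 = 4 * Real.sin α ^ 2 := by
    rw [hP0', hP1', eDist_exp_ofReal_mul_I_sq, show (0 - 2 * α) / 2 = -α by ring, Real.sin_neg]
    ring
  have hA : eDist P₀ Q₁ ^ 2 = 4 * Real.sin (x + α) ^ 2 + h ^ 2 := by
    rw [hP0', hQ1', eDist_exp_ofReal_mul_I_sq,
      show (0 - (2 * x + 2 * α)) / 2 = -(x + α) by ring, Real.sin_neg]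
    ring
  have hC : eDist P₁ Q₁ ^ 2 = 4 * Real.sin x ^ 2 + h ^ 2 := by
    rw [hP1', hQ1', eDist_exp_ofReal_mul_I_sq, show (2 * α - (2 * x + 2 * α)) / 2 = -x by ring,
      Real.sin_neg]
    ring
  rw [hA, hC, show 2 * π * ρ = 2 * x by ring]
  exact ⟨height_sq_eq x α h _ hB (sin_pi_div_ne_zero (by omega)),
    by rw [cos_two_mul_add_sub_cos_sq]⟩

theorem stmt3 (n : ℕ) (hn : 3 ≤ n) (h ρ : ℝ) (hh : 0 < h)
    (P₀ P₁ Q₁ : ℂ × ℝ)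
    (hP0 : P₀ = (1, 0))
    (hP1 : P₁ = (Complex.exp (2 * Real.pi * Complex.I / n), 0))
    (hQ1 : Q₁ = (Complex.exp (2 * Real.pi * Complex.I * ρ + 2 * Real.pi * Complex.I / n), h)) :
    eDist P₀ Q₁ ^ 2 -
      ((eDist P₀ P₁ ^ 2 + eDist P₀ Q₁ ^ 2 - eDist P₁ Q₁ ^ 2) / (2 * eDist P₀ P₁)) ^ 2
      = h ^ 2 + (Real.cos (2 * Real.pi * ρ + Real.pi / n) - Real.cos (Real.pi / n)) ^ 2 ∧
    h ^ 2 + (Real.cos (2 * Real.pi * ρ + Real.pi / n) - Real.cos (Real.pi / n)) ^ 2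
      = h ^ 2 + 4 * Real.sin (Real.pi * ρ) ^ 2 * Real.sin (Real.pi * ρ + Real.pi / n) ^ 2 :=
  stmt3_general n hn h ρ P₀ P₁ Q₁ hP0 hP1 hQ1
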